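/- arXiv:1708.03095 — 2 statements merged into one kernel-verified Lean document; each statement's English description precedes it below -/
import Mathlib

section
/- Let p, q ≥ 1. There exist a constant C_p > 0, depending only on p, and λ0 ≥ 1 such that for every λ ≥ λ0, all integers m, k with 2 ≤ k ≤ m, every integer ℓ with 0 ≤ ℓ ≤ p-1, and every v ∈ H^∞ ∩ 𝓗^∞_{Z_λ}: ‖λ^{p+1} y^{ℓ} D_y^{m-k} v‖ ≤ C_p ( ‖Z_λ D_y^{m-k} v‖ + ‖D_x^{m-k+1} v‖ + ‖D_y^{m-k+1} v‖ + λ^p ‖λ D_y^{m-k} v‖ ). -/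
open MeasureTheory Complex Real ENNReal

noncomputable section

abbrev Pt := ℝ × ℝ
abbrev Fn := Pt → ℂ

/-- ∂/∂x -/
def pdx (u : Fn) : Fn := fun z => fderiv ℝ u z (1, 0)
/-- ∂/∂y -/
def pdy (u : Fn) : Fn := fun z => fderiv ℝ u z (0, 1)
/-- D_x = -i ∂_x -/
def Dx (u : Fn) : Fn := fun z => -Complex.I * pdx u z
/-- D_y = -i ∂_y -/
def Dy (u : Fn) : Fn := fun z => -Complex.I * pdy u z

/-- Z_{1,λ} = D_x - (λ^{p+1}/2) y^p -/
def Z1 (p : ℕ) (lam : ℝ) (u : Fn) : Fn :=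
  fun z => Dx u z - ((lam ^ (p + 1) / 2 : ℝ) : ℂ) * (z.2 : ℂ) ^ p * u z
/-- Z_{2,λ} = D_y + (λ^{q+1}/2) x^q -/
def Z2 (q : ℕ) (lam : ℝ) (u : Fn) : Fn :=
  fun z => Dy u z + ((lam ^ (q + 1) / 2 : ℝ) : ℂ) * (z.1 : ℂ) ^ q * u z

/-- L_{p,q;λ} = Z_{1,λ}² + Z_{2,λ}² -/
def Lpq (p q : ℕ) (lam : ℝ) (u : Fn) : Fn :=
  fun z => Z1 p lam (Z1 p lam u) z + Z2 q lam (Z2 q lam u) z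

/-- M_{p,q;λ} = (i/2)(q λ^{q+1} x^{q-1} + p λ^{p+1} y^{p-1}) -/
def Mpq (p q : ℕ) (lam : ℝ) (u : Fn) : Fn :=
  fun z => Complex.I / 2 *
    ((q : ℂ) * (lam : ℂ) ^ (q + 1) * (z.1 : ℂ) ^ (q - 1) +
     (p : ℂ) * (lam : ℂ) ^ (p + 1) * (z.2 : ℂ) ^ (p - 1)) * u z

/-- L² norm (possibly infinite) -/
def N (u : Fn) : ℝ≥0∞ := eLpNorm u 2 volume

/-- ‖Z_λ u‖ = (‖Z_{1,λ}u‖² + ‖Z_{2,λ}u‖²)^{1/2} -/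
def ZN (p q : ℕ) (lam : ℝ) (u : Fn) : ℝ≥0∞ :=
  (N (Z1 p lam u) ^ 2 + N (Z2 q lam u) ^ 2) ^ (2⁻¹ : ℝ)

/-- H^∞ : smooth with all derivatives D_x^a D_y^b u in L² -/
def Hinf (u : Fn) : Prop :=
  ContDiff ℝ (⊤ : ℕ∞) u ∧ ∀ a b : ℕ, MemLp (Dx^[a] (Dy^[b] u)) 2 volume

/-- 𝓗^∞_{Z_λ} -/
def HZinf (p q : ℕ) (lam : ℝ) (u : Fn) : Prop :=
  ∀ a b : ℕ, MemLp (Z1 p lam (Dx^[a] (Dy^[b] u))) 2 volume ∧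
             MemLp (Z2 q lam (Dx^[a] (Dy^[b] u))) 2 volume


/-- multiplication by λ^e y^k -/
def mulY (lam : ℝ) (e k : ℕ) (u : Fn) : Fn :=
  fun z => ((lam : ℂ)) ^ e * (z.2 : ℂ) ^ k * u z
/-- multiplication by λ^e x^k -/
def mulX (lam : ℝ) (e k : ℕ) (u : Fn) : Fn :=
  fun z => ((lam : ℂ)) ^ e * (z.1 : ℂ) ^ k * u z

section Helpers

lemma contDiff_pdx {u : Fn} (h : ContDiff ℝ (⊤ : ℕ∞) u) : ContDiff ℝ (⊤ : ℕ∞) (pdx u) :=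
  (h.fderiv_right (by simp)).clm_apply contDiff_const

lemma contDiff_pdy {u : Fn} (h : ContDiff ℝ (⊤ : ℕ∞) u) : ContDiff ℝ (⊤ : ℕ∞) (pdy u) :=
  (h.fderiv_right (by simp)).clm_apply contDiff_const

lemma contDiff_Dx {u : Fn} (h : ContDiff ℝ (⊤ : ℕ∞) u) : ContDiff ℝ (⊤ : ℕ∞) (Dx u) :=
  contDiff_const.mul (contDiff_pdx h)

lemma contDiff_Dy {u : Fn} (h : ContDiff ℝ (⊤ : ℕ∞) u) : ContDiff ℝ (⊤ : ℕ∞) (Dy u) :=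
  contDiff_const.mul (contDiff_pdy h)

lemma contDiff_DxIter {u : Fn} (h : ContDiff ℝ (⊤ : ℕ∞) u) (a : ℕ) : ContDiff ℝ (⊤ : ℕ∞) (Dx^[a] u) := by
  induction a with
  | zero => simpa using h
  | succ n ih => rw [Function.iterate_succ_apply']; exact contDiff_Dx ih

lemma contDiff_DyIter {u : Fn} (h : ContDiff ℝ (⊤ : ℕ∞) u) (b : ℕ) : ContDiff ℝ (⊤ : ℕ∞) (Dy^[b] u) := by
  induction b with
  | zero => simpa using h
  | succ n ih => rw [Function.iterate_succ_apply']; exact contDiff_Dy ih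

lemma contDiff_iter {u : Fn} (h : ContDiff ℝ (⊤ : ℕ∞) u) (a b : ℕ) :
    ContDiff ℝ (⊤ : ℕ∞) (Dx^[a] (Dy^[b] u)) := contDiff_DxIter (contDiff_DyIter h b) a

lemma pdx_pdy_comm {u : Fn} (h : ContDiff ℝ (⊤ : ℕ∞) u) (z : Pt) : pdx (pdy u) z = pdy (pdx u) z := by
  have hfd : ContDiff ℝ (⊤ : ℕ∞) (fderiv ℝ u) := h.fderiv_right (by simp)
  have hdu : Differentiable ℝ u := h.differentiable (by simp)
  have hdfd : Differentiable ℝ (fderiv ℝ u) := hfd.differentiable (by simp)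
  have e1 : pdx (pdy u) z = fderiv ℝ (fderiv ℝ u) z ((1,0) : Pt) ((0,1) : Pt) := by
    show fderiv ℝ (fun w => fderiv ℝ u w ((0,1) : Pt)) z (1,0) = _
    rw [fderiv_clm_apply (hdfd z) (differentiableAt_const _)]
    simp
  have e2 : pdy (pdx u) z = fderiv ℝ (fderiv ℝ u) z ((0,1) : Pt) ((1,0) : Pt) := by
    show fderiv ℝ (fun w => fderiv ℝ u w ((1,0) : Pt)) z (0,1) = _
    rw [fderiv_clm_apply (hdfd z) (differentiableAt_const _)]
    simp
  rw [e1, e2]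
  exact second_derivative_symmetric (fun y => (hdu y).hasFDerivAt) ((hdfd z).hasFDerivAt) _ _

lemma Dx_Dy_comm {u : Fn} (h : ContDiff ℝ (⊤ : ℕ∞) u) : Dx (Dy u) = Dy (Dx u) := by
  funext z
  have h1 : pdx (Dy u) z = -Complex.I * pdx (pdy u) z := by
    show fderiv ℝ (fun w => -Complex.I * pdy u w) z (1,0) = _
    rw [fderiv_const_mul ((contDiff_pdy h).differentiable (by simp) z)]
    simp [pdx]
  have h2 : pdy (Dx u) z = -Complex.I * pdy (pdx u) z := by
    show fderiv ℝ (fun w => -Complex.I * pdx u w) z (0,1) = _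
    rw [fderiv_const_mul ((contDiff_pdx h).differentiable (by simp) z)]
    simp [pdy]
  show -Complex.I * pdx (Dy u) z = -Complex.I * pdy (Dx u) z
  rw [h1, h2, pdx_pdy_comm h z]

lemma DxIter_Dy_comm (a : ℕ) : ∀ u : Fn, ContDiff ℝ (⊤ : ℕ∞) u → Dx^[a] (Dy u) = Dy (Dx^[a] u) := by
  induction a with
  | zero => intro u _; simp
  | succ n ih =>
    intro u hu
    rw [Function.iterate_succ_apply, Function.iterate_succ_apply, Dx_Dy_comm hu,
      ih (Dx u) (contDiff_Dx hu)]


lemma integrable_mul_conj {f g : Fn} (mf : MemLp f 2 volume) (mg : MemLp g 2 volume) :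
    Integrable (fun z => f z * (starRingEnd ℂ) (g z)) volume := by
  have h := MeasureTheory.L2.integrable_inner (𝕜 := ℂ) (mg.toLp g) (mf.toLp f)
  refine h.congr ?_
  filter_upwards [mg.coeFn_toLp, mf.coeFn_toLp] with z h1 h2
  simp [RCLike.inner_apply, h1, h2, mul_comm]

lemma integral_eq_inner {f g : Fn} (mf : MemLp f 2 volume) (mg : MemLp g 2 volume) :
    ∫ z, f z * (starRingEnd ℂ) (g z) = @inner ℂ _ _ (mg.toLp g) (mf.toLp f) := by
  rw [MeasureTheory.L2.inner_def]
  refine (integral_congr_ae ?_).symm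
  filter_upwards [mg.coeFn_toLp, mf.coeFn_toLp] with z h1 h2
  simp [RCLike.inner_apply, h1, h2, mul_comm]

lemma cs_bound {f g : Fn} (mf : MemLp f 2 volume) (mg : MemLp g 2 volume) :
    ‖∫ z, f z * (starRingEnd ℂ) (g z)‖ ≤
      (eLpNorm f 2 volume).toReal * (eLpNorm g 2 volume).toReal := by
  rw [integral_eq_inner mf mg]
  calc ‖@inner ℂ _ _ (mg.toLp g) (mf.toLp f)‖ ≤ ‖mg.toLp g‖ * ‖mf.toLp f‖ :=
        norm_inner_le_norm _ _
    _ = (eLpNorm f 2 volume).toReal * (eLpNorm g 2 volume).toReal := by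
        rw [MeasureTheory.Lp.norm_toLp, MeasureTheory.Lp.norm_toLp, mul_comm]

lemma integral_self_conj {f : Fn} (mf : MemLp f 2 volume) :
    ∫ z, f z * (starRingEnd ℂ) (f z) = (((eLpNorm f 2 volume).toReal : ℂ)) ^ 2 := by
  rw [integral_eq_inner mf mf, inner_self_eq_norm_sq_to_K, MeasureTheory.Lp.norm_toLp]
  norm_cast

lemma integral_pd_eq_zero_x {F G : Fn} (hF : Integrable F volume) (hG : Integrable G volume)
    (hslice : ∀ z : Pt, HasDerivAt (fun t => F (t, z.2)) (G z) z.1) :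
    ∫ z, G z = 0 := by
  have hvol : (volume : Measure Pt) = (volume : Measure ℝ).prod volume :=
    MeasureTheory.Measure.volume_eq_prod ℝ ℝ
  rw [hvol] at hF hG ⊢
  rw [MeasureTheory.integral_prod_symm _ hG]
  have h1 := hF.prod_left_ae
  have h2 := hG.prod_left_ae
  have hz : ∀ᵐ y : ℝ, (∫ x : ℝ, G (x, y)) = 0 := by
    filter_upwards [h1, h2] with y hFy hGy
    exact MeasureTheory.integral_eq_zero_of_hasDerivAt_of_integrable
      (fun x => hslice (x, y)) hGy hFy
  rw [integral_congr_ae hz, integral_zero]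

lemma integral_pd_eq_zero_y {F G : Fn} (hF : Integrable F volume) (hG : Integrable G volume)
    (hslice : ∀ z : Pt, HasDerivAt (fun t => F (z.1, t)) (G z) z.2) :
    ∫ z, G z = 0 := by
  have hvol : (volume : Measure Pt) = (volume : Measure ℝ).prod volume :=
    MeasureTheory.Measure.volume_eq_prod ℝ ℝ
  rw [hvol] at hF hG ⊢
  rw [MeasureTheory.integral_prod _ hG]
  have h1 := hF.prod_right_ae
  have h2 := hG.prod_right_ae
  have hz : ∀ᵐ x : ℝ, (∫ y : ℝ, G (x, y)) = 0 := by
    filter_upwards [h1, h2] with x hFx hGx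
    exact MeasureTheory.integral_eq_zero_of_hasDerivAt_of_integrable
      (fun y => hslice (x, y)) hGx hFx
  rw [integral_congr_ae hz, integral_zero]


/-- slice derivative in x -/
lemma slice_x {u : Fn} (hu : Differentiable ℝ u) (z : Pt) :
    HasDerivAt (fun t => u (t, z.2)) (pdx u z) z.1 := by
  have hcurve : HasDerivAt (fun t : ℝ => ((t, z.2) : Pt)) ((1, 0) : Pt) z.1 :=
    (hasDerivAt_id z.1).prodMk (hasDerivAt_const z.1 z.2)
  have := ((hu (z.1, z.2)).hasFDerivAt).comp_hasDerivAt z.1 hcurve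
  simpa [pdx, Function.comp_def] using this

lemma slice_y {u : Fn} (hu : Differentiable ℝ u) (z : Pt) :
    HasDerivAt (fun t => u (z.1, t)) (pdy u z) z.2 := by
  have hcurve : HasDerivAt (fun t : ℝ => ((z.1, t) : Pt)) ((0, 1) : Pt) z.2 :=
    (hasDerivAt_const z.2 z.1).prodMk (hasDerivAt_id z.2)
  have := ((hu (z.1, z.2)).hasFDerivAt).comp_hasDerivAt z.2 hcurve
  simpa [pdy, Function.comp_def] using this

lemma slice_conj {w : ℝ → ℂ} {w' : ℂ} {t : ℝ} (h : HasDerivAt w w' t) :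
    HasDerivAt (fun s => (starRingEnd ℂ) (w s)) ((starRingEnd ℂ) w') t := by
  have := (Complex.conjCLE.toContinuousLinearMap.hasFDerivAt).comp_hasDerivAt t h
  simpa [Function.comp_def] using this

lemma ibp_pdx {g h : Fn} (hg : ContDiff ℝ (⊤ : ℕ∞) g) (hh : ContDiff ℝ (⊤ : ℕ∞) h)
    (mg : MemLp g 2 volume) (mh : MemLp h 2 volume)
    (mdg : MemLp (pdx g) 2 volume) (mdh : MemLp (pdx h) 2 volume) :
    ∫ z, pdx g z * (starRingEnd ℂ) (h z) = - ∫ z, g z * (starRingEnd ℂ) (pdx h z) := by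
  have dg : Differentiable ℝ g := hg.differentiable (by simp)
  have dh : Differentiable ℝ h := hh.differentiable (by simp)
  have hFi : Integrable (fun z => g z * (starRingEnd ℂ) (h z)) volume :=
    integrable_mul_conj mg mh
  have hA : Integrable (fun z => pdx g z * (starRingEnd ℂ) (h z)) volume :=
    integrable_mul_conj mdg mh
  have hB : Integrable (fun z => g z * (starRingEnd ℂ) (pdx h z)) volume :=
    integrable_mul_conj mg mdh
  have hGi : Integrable (fun z => pdx g z * (starRingEnd ℂ) (h z)
      + g z * (starRingEnd ℂ) (pdx h z)) volume := hA.add hB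
  have hslice : ∀ z : Pt, HasDerivAt (fun t => g (t, z.2) * (starRingEnd ℂ) (h (t, z.2)))
      (pdx g z * (starRingEnd ℂ) (h z) + g z * (starRingEnd ℂ) (pdx h z)) z.1 := by
    intro z
    have h1 := slice_x dg z
    have h2 := slice_conj (slice_x dh z)
    have : HasDerivAt (fun t => g (t, z.2) * (starRingEnd ℂ) (h (t, z.2))) _ z.1 := h1.mul h2
    convert this using 1
    try ring
  have hzero := integral_pd_eq_zero_x hFi hGi hslice
  rw [integral_add hA hB] at hzero
  linear_combination hzero

lemma ibp_pdy {g h : Fn} (hg : ContDiff ℝ (⊤ : ℕ∞) g) (hh : ContDiff ℝ (⊤ : ℕ∞) h)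
    (mg : MemLp g 2 volume) (mh : MemLp h 2 volume)
    (mdg : MemLp (pdy g) 2 volume) (mdh : MemLp (pdy h) 2 volume) :
    ∫ z, pdy g z * (starRingEnd ℂ) (h z) = - ∫ z, g z * (starRingEnd ℂ) (pdy h z) := by
  have dg : Differentiable ℝ g := hg.differentiable (by simp)
  have dh : Differentiable ℝ h := hh.differentiable (by simp)
  have hFi : Integrable (fun z => g z * (starRingEnd ℂ) (h z)) volume :=
    integrable_mul_conj mg mh
  have hA : Integrable (fun z => pdy g z * (starRingEnd ℂ) (h z)) volume :=
    integrable_mul_conj mdg mh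
  have hB : Integrable (fun z => g z * (starRingEnd ℂ) (pdy h z)) volume :=
    integrable_mul_conj mg mdh
  have hGi : Integrable (fun z => pdy g z * (starRingEnd ℂ) (h z)
      + g z * (starRingEnd ℂ) (pdy h z)) volume := hA.add hB
  have hslice : ∀ z : Pt, HasDerivAt (fun t => g (z.1, t) * (starRingEnd ℂ) (h (z.1, t)))
      (pdy g z * (starRingEnd ℂ) (h z) + g z * (starRingEnd ℂ) (pdy h z)) z.2 := by
    intro z
    have h1 := slice_y dg z
    have h2 := slice_conj (slice_y dh z)
    have : HasDerivAt (fun t => g (z.1, t) * (starRingEnd ℂ) (h (z.1, t))) _ z.2 := h1.mul h2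
    convert this using 1
    try ring
  have hzero := integral_pd_eq_zero_y hFi hGi hslice
  rw [integral_add hA hB] at hzero
  linear_combination hzero

/-- pdx in terms of Dx -/
lemma pdx_eq_I_Dx (u : Fn) : pdx u = fun z => Complex.I * Dx u z := by
  funext z; simp [Dx]; ring_nf; simp [Complex.I_sq] <;> try ring

lemma pdy_eq_I_Dy (u : Fn) : pdy u = fun z => Complex.I * Dy u z := by
  funext z; simp [Dy]; ring_nf; simp [Complex.I_sq] <;> try ring

lemma memLp_pdx {u : Fn} (m : MemLp (Dx u) 2 volume) : MemLp (pdx u) 2 volume := by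
  rw [pdx_eq_I_Dx]; exact m.const_mul _

lemma memLp_pdy {u : Fn} (m : MemLp (Dy u) 2 volume) : MemLp (pdy u) 2 volume := by
  rw [pdy_eq_I_Dy]; exact m.const_mul _

lemma adj_Dx {g h : Fn} (hg : ContDiff ℝ (⊤ : ℕ∞) g) (hh : ContDiff ℝ (⊤ : ℕ∞) h)
    (mg : MemLp g 2 volume) (mh : MemLp h 2 volume)
    (mdg : MemLp (Dx g) 2 volume) (mdh : MemLp (Dx h) 2 volume) :
    ∫ z, Dx g z * (starRingEnd ℂ) (h z) = ∫ z, g z * (starRingEnd ℂ) (Dx h z) := by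
  have key := ibp_pdx hg hh mg mh (memLp_pdx mdg) (memLp_pdx mdh)
  have e1 : (fun z => Dx g z * (starRingEnd ℂ) (h z))
      = fun z => -Complex.I * (pdx g z * (starRingEnd ℂ) (h z)) := by
    funext z; simp [Dx]; ring
  have e2 : (fun z => g z * (starRingEnd ℂ) (Dx h z))
      = fun z => Complex.I * (g z * (starRingEnd ℂ) (pdx h z)) := by
    funext z; simp [Dx]; ring
  rw [e1, e2, integral_const_mul, integral_const_mul, key]
  ring

lemma adj_Dy {g h : Fn} (hg : ContDiff ℝ (⊤ : ℕ∞) g) (hh : ContDiff ℝ (⊤ : ℕ∞) h)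
    (mg : MemLp g 2 volume) (mh : MemLp h 2 volume)
    (mdg : MemLp (Dy g) 2 volume) (mdh : MemLp (Dy h) 2 volume) :
    ∫ z, Dy g z * (starRingEnd ℂ) (h z) = ∫ z, g z * (starRingEnd ℂ) (Dy h z) := by
  have key := ibp_pdy hg hh mg mh (memLp_pdy mdg) (memLp_pdy mdh)
  have e1 : (fun z => Dy g z * (starRingEnd ℂ) (h z))
      = fun z => -Complex.I * (pdy g z * (starRingEnd ℂ) (h z)) := by
    funext z; simp [Dy]; ring
  have e2 : (fun z => g z * (starRingEnd ℂ) (Dy h z))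
      = fun z => Complex.I * (g z * (starRingEnd ℂ) (pdy h z)) := by
    funext z; simp [Dy]; ring
  rw [e1, e2, integral_const_mul, integral_const_mul, key]
  ring


/-- discrete log-convexity maximum principle -/
lemma discrete_lemma (n : ℕ) (a : ℕ → ℝ) (h0 : ∀ j, 0 ≤ a j)
    (hkey : ∀ j, 1 ≤ j → j ≤ n → a j ^ 2 ≤ a (j - 1) * a (j + 1)) :
    a 1 ≤ a 0 + a (n + 1) := by
  have claim' : ∀ j, 1 ≤ j → j ≤ n → a j * a 1 ≤ a 0 * a (j + 1) := by
    intro j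
    induction j with
    | zero => intro h; omega
    | succ i ih =>
      intro _ hle
      rcases Nat.eq_zero_or_pos i with rfl | hi
      · have h1 := hkey 1 le_rfl hle
        simpa [sq] using h1
      · have hik := hkey (i + 1) (by omega) hle
        have hIH := ih hi (by omega)
        rcases eq_or_lt_of_le (h0 (i + 1)) with hz | hz
        · rw [← hz, zero_mul]
          exact mul_nonneg (h0 0) (h0 (i + 2))
        · have hik' : a (i + 1) ^ 2 ≤ a i * a (i + 2) := by
            simpa using hik
          have h1 : a (i + 1) * (a (i + 1) * a 1) ≤ a (i + 1) * (a 0 * a (i + 2)) := by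
            nlinarith [mul_le_mul_of_nonneg_right hik' (h0 1),
              mul_le_mul_of_nonneg_right hIH (h0 (i + 2)), h0 i, h0 1, h0 (i + 2)]
          exact le_of_mul_le_mul_left h1 hz
  have claim : ∀ j, 1 ≤ j → j ≤ n + 1 → a 1 ^ j ≤ a 0 ^ (j - 1) * a j := by
    intro j
    induction j with
    | zero => intro h; omega
    | succ i ih =>
      intro _ hle
      rcases Nat.eq_zero_or_pos i with rfl | hi
      · simp
      · have hIH := ih hi (by omega)
        have hcl := claim' i hi (by omega)
        have h2 : a 0 ^ (i - 1) * a 0 = a 0 ^ i := by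
          rw [← pow_succ]; congr 1; omega
        calc a 1 ^ (i + 1) = a 1 ^ i * a 1 := pow_succ _ _
          _ ≤ (a 0 ^ (i - 1) * a i) * a 1 := mul_le_mul_of_nonneg_right hIH (h0 1)
          _ = a 0 ^ (i - 1) * (a i * a 1) := by ring
          _ ≤ a 0 ^ (i - 1) * (a 0 * a (i + 1)) :=
              mul_le_mul_of_nonneg_left hcl (pow_nonneg (h0 0) _)
          _ = (a 0 ^ (i - 1) * a 0) * a (i + 1) := by ring
          _ = a 0 ^ i * a (i + 1) := by rw [h2]
  have hfin := claim (n + 1) (by omega) le_rfl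
  have hsum : (0 : ℝ) ≤ a 0 + a (n + 1) := by
    have := h0 0; have := h0 (n + 1); linarith
  have hM : a 0 ^ (n + 1 - 1) * a (n + 1) ≤ (a 0 + a (n + 1)) ^ (n + 1) := by
    have h1 : a 0 ≤ a 0 + a (n + 1) := by linarith [h0 (n + 1)]
    have h2 : a (n + 1) ≤ a 0 + a (n + 1) := by linarith [h0 0]
    have : a 0 ^ (n + 1 - 1) * a (n + 1) ≤ (a 0 + a (n + 1)) ^ n * (a 0 + a (n + 1)) := by
      simp only [Nat.add_sub_cancel]
      exact mul_le_mul (pow_le_pow_left₀ (h0 0) h1 n) h2 (h0 (n + 1)) (pow_nonneg hsum n)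
    calc a 0 ^ (n + 1 - 1) * a (n + 1) ≤ (a 0 + a (n + 1)) ^ n * (a 0 + a (n + 1)) := this
      _ = (a 0 + a (n + 1)) ^ (n + 1) := (pow_succ _ _).symm
  exact le_of_pow_le_pow_left₀ (Nat.succ_ne_zero n) hsum (hfin.trans hM)

/-- the key integral identity and Cauchy-Schwarz step -/
lemma key_step (v : Fn) (hv : ContDiff ℝ (⊤ : ℕ∞) v)
    (hv2 : ∀ a b : ℕ, MemLp (Dx^[a] (Dy^[b] v)) 2 volume) (j c : ℕ) :
    ∫ z, (Dx^[j+1] (Dy^[c+1] v)) z * (starRingEnd ℂ) ((Dx^[j+1] (Dy^[c+1] v)) z)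
      = ∫ z, (Dx^[j] (Dy^[c+2] v)) z * (starRingEnd ℂ) ((Dx^[j+2] (Dy^[c] v)) z) := by
  set P : Fn := Dx^[j] (Dy^[c+1] v) with hP
  set Q : Fn := Dx^[j+1] (Dy^[c+1] v) with hQ
  set S : Fn := Dx^[j+2] (Dy^[c] v) with hS
  set T : Fn := Dx^[j] (Dy^[c+2] v) with hT
  have hQP : Q = Dx P := by
    rw [hQ, hP, Function.iterate_succ_apply']
  have hDxQ : Dx Q = Dx^[j+2] (Dy^[c+1] v) := by
    rw [hQ, Function.iterate_succ_apply' Dx (j+1)]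
  have hDxQ_DyS : Dx Q = Dy S := by
    rw [hDxQ, hS]
    have : Dy^[c+1] v = Dy (Dy^[c] v) := Function.iterate_succ_apply' Dy c v
    rw [this, DxIter_Dy_comm (j+2) (Dy^[c] v) (contDiff_DyIter hv c)]
  have hDyP_T : Dy P = T := by
    rw [hP, hT]
    have h1 : Dy^[c+2] v = Dy (Dy^[c+1] v) := Function.iterate_succ_apply' Dy (c+1) v
    rw [h1, ← DxIter_Dy_comm j (Dy^[c+1] v) (contDiff_DyIter hv (c+1))]
  -- memℒp facts
  have mP : MemLp P 2 volume := hv2 j (c+1)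
  have mQ : MemLp Q 2 volume := hv2 (j+1) (c+1)
  have mS : MemLp S 2 volume := hv2 (j+2) c
  have mT : MemLp T 2 volume := hv2 j (c+2)
  have mDxP : MemLp (Dx P) 2 volume := by rw [← hQP]; exact mQ
  have mDxQ : MemLp (Dx Q) 2 volume := by rw [hDxQ]; exact hv2 (j+2) (c+1)
  have mDyP : MemLp (Dy P) 2 volume := by rw [hDyP_T]; exact mT
  have mDyS : MemLp (Dy S) 2 volume := by rw [← hDxQ_DyS]; exact mDxQ
  -- smoothness
  have sP : ContDiff ℝ (⊤ : ℕ∞) P := contDiff_iter hv j (c+1)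
  have sQ : ContDiff ℝ (⊤ : ℕ∞) Q := contDiff_iter hv (j+1) (c+1)
  have sS : ContDiff ℝ (⊤ : ℕ∞) S := contDiff_iter hv (j+2) c
  calc ∫ z, Q z * (starRingEnd ℂ) (Q z) = ∫ z, Dx P z * (starRingEnd ℂ) (Q z) := by rw [← hQP]
    _ = ∫ z, P z * (starRingEnd ℂ) (Dx Q z) := adj_Dx sP sQ mP mQ mDxP mDxQ
    _ = ∫ z, P z * (starRingEnd ℂ) (Dy S z) := by rw [hDxQ_DyS]
    _ = ∫ z, Dy P z * (starRingEnd ℂ) (S z) := (adj_Dy sP sS mP mS mDyP mDyS).symm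
    _ = ∫ z, T z * (starRingEnd ℂ) (S z) := by rw [hDyP_T]

/-- interpolation inequality -/
lemma interp (v : Fn) (hv1 : ContDiff ℝ (⊤ : ℕ∞) v)
    (hv2 : ∀ a b : ℕ, MemLp (Dx^[a] (Dy^[b] v)) 2 volume) (n : ℕ) :
    eLpNorm (Dx (Dy^[n] v)) 2 volume
      ≤ eLpNorm (Dx^[n+1] v) 2 volume + eLpNorm (Dy^[n+1] v) 2 volume := by
  set a : ℕ → ℝ := fun j => (eLpNorm (Dx^[j] (Dy^[n+1-j] v)) 2 volume).toReal with ha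
  have h0 : ∀ j, 0 ≤ a j := fun j => ENNReal.toReal_nonneg
  have hkey : ∀ j, 1 ≤ j → j ≤ n → a j ^ 2 ≤ a (j - 1) * a (j + 1) := by
    intro j h1 h2
    obtain ⟨j', rfl⟩ : ∃ j', j = j' + 1 := ⟨j - 1, by omega⟩
    obtain ⟨c, e1, e2, e3⟩ : ∃ c, n + 1 - (j' + 1) = c + 1 ∧ n + 1 - j' = c + 2 ∧
        n + 1 - (j' + 2) = c := ⟨n - (j' + 1), by omega⟩
    have hQint := integral_self_conj (f := Dx^[j'+1] (Dy^[c+1] v)) (hv2 (j'+1) (c+1))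
    have hks := key_step v hv1 hv2 j' c
    have hcs := cs_bound (f := Dx^[j'] (Dy^[c+2] v)) (g := Dx^[j'+2] (Dy^[c] v))
      (hv2 j' (c+2)) (hv2 (j'+2) c)
    have e4 : a (j' + 1) = (eLpNorm (Dx^[j'+1] (Dy^[c+1] v)) 2 volume).toReal := by
      show (eLpNorm (Dx^[j'+1] (Dy^[n+1-(j'+1)] v)) 2 volume).toReal = _
      rw [e1]
    have e5 : a (j' + 1 - 1) = (eLpNorm (Dx^[j'] (Dy^[c+2] v)) 2 volume).toReal := by
      show (eLpNorm (Dx^[j'] (Dy^[n+1-j'] v)) 2 volume).toReal = _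
      rw [e2]
    have e6 : a (j' + 1 + 1) = (eLpNorm (Dx^[j'+2] (Dy^[c] v)) 2 volume).toReal := by
      show (eLpNorm (Dx^[j'+2] (Dy^[n+1-(j'+2)] v)) 2 volume).toReal = _
      rw [e3]
    have hr : (0:ℝ) ≤ (eLpNorm (Dx^[j'+1] (Dy^[c+1] v)) 2 volume).toReal := ENNReal.toReal_nonneg
    have hnorm : (eLpNorm (Dx^[j'+1] (Dy^[c+1] v)) 2 volume).toReal ^ 2
        = ‖∫ z, (Dx^[j'+1] (Dy^[c+1] v)) z * (starRingEnd ℂ) ((Dx^[j'+1] (Dy^[c+1] v)) z)‖ := by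
      rw [hQint, norm_pow, Complex.norm_real, Real.norm_eq_abs, _root_.abs_of_nonneg hr]
    rw [e4, e5, e6, hnorm, hks]
    exact hcs
  have main := discrete_lemma n a h0 hkey
  have fin : ∀ x y : ℕ, eLpNorm (Dx^[x] (Dy^[y] v)) 2 volume ≠ ⊤ :=
    fun x y => (hv2 x y).eLpNorm_ne_top
  have f1 : ENNReal.ofReal (a 1) = eLpNorm (Dx^[1] (Dy^[n+1-1] v)) 2 volume :=
    ENNReal.ofReal_toReal (fin 1 _)
  have f0 : ENNReal.ofReal (a 0) = eLpNorm (Dx^[0] (Dy^[n+1-0] v)) 2 volume :=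
    ENNReal.ofReal_toReal (fin 0 _)
  have f2 : ENNReal.ofReal (a (n+1)) = eLpNorm (Dx^[n+1] (Dy^[n+1-(n+1)] v)) 2 volume :=
    ENNReal.ofReal_toReal (fin (n+1) _)
  have g1 : Dx^[1] (Dy^[n+1-1] v) = Dx (Dy^[n] v) := by simp
  have g0 : Dx^[0] (Dy^[n+1-0] v) = Dy^[n+1] v := by simp
  have g2 : Dx^[n+1] (Dy^[n+1-(n+1)] v) = Dx^[n+1] v := by simp
  rw [g1] at f1; rw [g0] at f0; rw [g2] at f2
  rw [← f1, ← f0, ← f2, ← ENNReal.ofReal_add ENNReal.toReal_nonneg ENNReal.toReal_nonneg]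
  exact ENNReal.ofReal_le_ofReal (by linarith)


end Helpers

/-- weighted estimate for λ^{p+1} y^ℓ D_y^{m-k} v. -/
theorem stmt_12 (p q : ℕ) (hp : 1 ≤ p) (hq : 1 ≤ q) :
    ∃ Cp : ℝ, 0 < Cp ∧ ∃ lam0 : ℝ, 1 ≤ lam0 ∧
    ∀ lam : ℝ, lam0 ≤ lam → ∀ m k : ℕ, 2 ≤ k → k ≤ m →
    ∀ l : ℕ, l ≤ p - 1 →
    ∀ v : Fn, Hinf v → HZinf p q lam v →
    N (mulY lam (p + 1) l (Dy^[m - k] v)) ≤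
      ENNReal.ofReal Cp *
        (ZN p q lam (Dy^[m - k] v) + N (Dx^[m - k + 1] v) + N (Dy^[m - k + 1] v)
          + ENNReal.ofReal (lam ^ p) * (ENNReal.ofReal lam * N (Dy^[m - k] v))) := by
  refine ⟨2, by norm_num, 1, le_rfl, ?_⟩
  intro lam hlam m k hk2 hkm l hl v hv hz
  set n := m - k with hn
  set w : Fn := Dy^[n] v with hw
  have hlam0 : (0:ℝ) < lam := lt_of_lt_of_le one_pos hlam
  have hvs : ContDiff ℝ (⊤ : ℕ∞) v := hv.1
  have hws : ContDiff ℝ (⊤ : ℕ∞) w := by rw [hw]; exact contDiff_DyIter hvs n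
  have mw : MemLp w 2 volume := by rw [hw]; simpa using hv.2 0 n
  have mZ1 : MemLp (Z1 p lam w) 2 volume := by rw [hw]; simpa using (hz 0 n).1
  have mDxw : MemLp (Dx w) 2 volume := by rw [hw]; simpa using hv.2 1 n
  have contw : Continuous w := hws.continuous
  have contDxw : Continuous (Dx w) := (contDiff_Dx hws).continuous
  have contZ1 : Continuous (Z1 p lam w) := by
    unfold Z1
    exact contDxw.sub
      ((continuous_const.mul ((Complex.continuous_ofReal.comp continuous_snd).pow p)).mul contw)
  -- pointwise bound
  have hpt : ∀ z : Pt, ‖mulY lam (p + 1) l w z‖ ≤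
      ‖(fun z => 2 * ‖Z1 p lam w z‖ + (2 * ‖Dx w z‖ + lam ^ (p + 1) * ‖w z‖)) z‖ := by
    intro z
    have hlp1 : (0:ℝ) < lam ^ (p + 1) := pow_pos hlam0 _
    have h1 : ‖mulY lam (p + 1) l w z‖ = lam ^ (p + 1) * |z.2| ^ l * ‖w z‖ := by
      simp [mulY, norm_mul, norm_pow, Complex.norm_real, Real.norm_eq_abs,
        abs_of_pos hlam0, mul_assoc]
    have hid : ((lam : ℂ)) ^ (p + 1) * ((z.2 : ℂ)) ^ p * w z
        = 2 * Dx w z - 2 * Z1 p lam w z := by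
      simp only [Z1]
      push_cast
      ring
    have h2 : lam ^ (p + 1) * |z.2| ^ p * ‖w z‖ ≤ 2 * ‖Dx w z‖ + 2 * ‖Z1 p lam w z‖ := by
      have hnn : ‖((lam : ℂ)) ^ (p + 1) * ((z.2 : ℂ)) ^ p * w z‖
          = lam ^ (p + 1) * |z.2| ^ p * ‖w z‖ := by
        simp [norm_mul, norm_pow, Complex.norm_real, Real.norm_eq_abs,
          abs_of_pos hlam0, mul_assoc]
      rw [← hnn, hid]
      calc ‖2 * Dx w z - 2 * Z1 p lam w z‖ ≤ ‖2 * Dx w z‖ + ‖2 * Z1 p lam w z‖ :=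
            norm_sub_le _ _
        _ = 2 * ‖Dx w z‖ + 2 * ‖Z1 p lam w z‖ := by simp [norm_mul]
    have h3 : |z.2| ^ l ≤ |z.2| ^ p + 1 := by
      rcases le_total (|z.2|) 1 with hy | hy
      · have hh : |z.2| ^ l ≤ 1 := pow_le_one₀ (abs_nonneg _) hy
        nlinarith [pow_nonneg (abs_nonneg z.2) p]
      · have hlp : l ≤ p := by omega
        have hh : |z.2| ^ l ≤ |z.2| ^ p := pow_le_pow_right₀ hy hlp
        linarith
    have h4 : ‖2 * ‖Z1 p lam w z‖ + (2 * ‖Dx w z‖ + lam ^ (p + 1) * ‖w z‖)‖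
        = 2 * ‖Z1 p lam w z‖ + (2 * ‖Dx w z‖ + lam ^ (p + 1) * ‖w z‖) :=
      Real.norm_of_nonneg (by positivity)
    simp only []
    rw [h1, h4]
    have f1 := mul_le_mul_of_nonneg_right
      (mul_le_mul_of_nonneg_left h3 hlp1.le) (norm_nonneg (w z))
    nlinarith [f1, h2]
  -- measurability
  have meas1 : AEStronglyMeasurable (fun z : Pt => 2 * ‖Z1 p lam w z‖) volume :=
    (continuous_const.mul contZ1.norm).aestronglyMeasurable
  have meas2 : AEStronglyMeasurable (fun z : Pt => 2 * ‖Dx w z‖) volume :=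
    (continuous_const.mul contDxw.norm).aestronglyMeasurable
  have meas3 : AEStronglyMeasurable (fun z : Pt => lam ^ (p + 1) * ‖w z‖) volume :=
    (continuous_const.mul contw.norm).aestronglyMeasurable
  have eLpNorm_cmul : ∀ (c : ℝ), 0 ≤ c → ∀ f : Fn,
      eLpNorm (fun z => c * ‖f z‖) 2 volume = ENNReal.ofReal c * eLpNorm f 2 volume := by
    intro c hc f
    have hfun : (fun z : Pt => c * ‖f z‖) = c • (fun z : Pt => ‖f z‖) := by
      funext z; simp
    rw [hfun, eLpNorm_const_smul, eLpNorm_norm, ← Real.enorm_eq_ofReal hc]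
  have big : N (mulY lam (p + 1) l w) ≤
      ENNReal.ofReal 2 * N (Z1 p lam w) + (ENNReal.ofReal 2 * N (Dx w)
        + ENNReal.ofReal (lam ^ (p + 1)) * N w) := by
    calc N (mulY lam (p + 1) l w)
        ≤ eLpNorm (fun z : Pt => 2 * ‖Z1 p lam w z‖
            + (2 * ‖Dx w z‖ + lam ^ (p + 1) * ‖w z‖)) 2 volume := eLpNorm_mono hpt
      _ ≤ eLpNorm (fun z : Pt => 2 * ‖Z1 p lam w z‖) 2 volume
            + eLpNorm (fun z : Pt => 2 * ‖Dx w z‖ + lam ^ (p + 1) * ‖w z‖) 2 volume :=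
          eLpNorm_add_le meas1 (meas2.add meas3) one_le_two
      _ ≤ eLpNorm (fun z : Pt => 2 * ‖Z1 p lam w z‖) 2 volume
            + (eLpNorm (fun z : Pt => 2 * ‖Dx w z‖) 2 volume
              + eLpNorm (fun z : Pt => lam ^ (p + 1) * ‖w z‖) 2 volume) :=
          add_le_add_right (eLpNorm_add_le meas2 meas3 one_le_two) _
      _ = ENNReal.ofReal 2 * N (Z1 p lam w) + (ENNReal.ofReal 2 * N (Dx w)
            + ENNReal.ofReal (lam ^ (p + 1)) * N w) := by
          rw [eLpNorm_cmul 2 (by norm_num) (Z1 p lam w), eLpNorm_cmul 2 (by norm_num) (Dx w),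
            eLpNorm_cmul _ (pow_nonneg hlam0.le _) w]
          rfl
  have hZN : N (Z1 p lam w) ≤ ZN p q lam w := by
    unfold ZN
    have hrw : N (Z1 p lam w) = ((N (Z1 p lam w)) ^ 2) ^ (2⁻¹ : ℝ) := by
      rw [← ENNReal.rpow_natCast (N (Z1 p lam w)) 2, ← ENNReal.rpow_mul]
      norm_num
    calc N (Z1 p lam w) = ((N (Z1 p lam w)) ^ 2) ^ (2⁻¹ : ℝ) := hrw
      _ ≤ (N (Z1 p lam w) ^ 2 + N (Z2 q lam w) ^ 2) ^ (2⁻¹ : ℝ) :=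
          ENNReal.rpow_le_rpow le_self_add (by norm_num)
  have hint : N (Dx w) ≤ N (Dx^[n + 1] v) + N (Dy^[n + 1] v) := by
    rw [hw]
    exact interp v hvs hv.2 n
  have hpow : ENNReal.ofReal (lam ^ (p + 1)) = ENNReal.ofReal (lam ^ p) * ENNReal.ofReal lam := by
    rw [← ENNReal.ofReal_mul (pow_nonneg hlam0.le p), ← pow_succ]
  have h2e : ENNReal.ofReal (2:ℝ) = 2 := by
    simp [ENNReal.ofReal_ofNat]
  have t1 : (2:ℝ≥0∞) * N (Z1 p lam w) ≤ 2 * ZN p q lam w := mul_le_mul_right hZN 2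
  have t2 : (2:ℝ≥0∞) * N (Dx w) ≤ 2 * N (Dx^[n + 1] v) + 2 * N (Dy^[n + 1] v) := by
    rw [← mul_add]
    exact mul_le_mul_right hint 2
  have t3 : ENNReal.ofReal (lam ^ (p + 1)) * N w
      ≤ 2 * (ENNReal.ofReal (lam ^ p) * (ENNReal.ofReal lam * N w)) := by
    rw [hpow, mul_assoc]
    calc ENNReal.ofReal (lam ^ p) * (ENNReal.ofReal lam * N w)
        = 1 * (ENNReal.ofReal (lam ^ p) * (ENNReal.ofReal lam * N w)) := (one_mul _).symm
      _ ≤ 2 * (ENNReal.ofReal (lam ^ p) * (ENNReal.ofReal lam * N w)) :=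
          mul_le_mul_left one_le_two _
  have final : ENNReal.ofReal 2 * N (Z1 p lam w) + (ENNReal.ofReal 2 * N (Dx w)
      + ENNReal.ofReal (lam ^ (p + 1)) * N w)
      ≤ ENNReal.ofReal 2 * (ZN p q lam w + N (Dx^[n + 1] v) + N (Dy^[n + 1] v)
        + ENNReal.ofReal (lam ^ p) * (ENNReal.ofReal lam * N w)) := by
    rw [h2e]
    calc (2:ℝ≥0∞) * N (Z1 p lam w) + (2 * N (Dx w) + ENNReal.ofReal (lam ^ (p + 1)) * N w)
        ≤ 2 * ZN p q lam w + ((2 * N (Dx^[n + 1] v) + 2 * N (Dy^[n + 1] v))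
            + 2 * (ENNReal.ofReal (lam ^ p) * (ENNReal.ofReal lam * N w))) :=
          add_le_add t1 (add_le_add t2 t3)
      _ = 2 * (ZN p q lam w + N (Dx^[n + 1] v) + N (Dy^[n + 1] v)
            + ENNReal.ofReal (lam ^ p) * (ENNReal.ofReal lam * N w)) := by ring
  exact big.trans final

end
end

section
/- Let p, q ≥ 1, let λ > 0, and let σ, τ ≥ 1. If the parametric system operator is globally G^{σ,τ}-hypoelliptic (i.e., whenever u1, u2 ∈ L²(ℝ²) and v1, v2 ∈ G^{σ,τ}(ℝ²) satisfy L_{p,q;λ} u1 - M_{p,q;λ} u2 = v1 and L_{p,q;λ} u2 + M_{p,q;λ} u1 = v2 in the sense of tempered distributions, then u1, u2 ∈ G^{σ,τ}(ℝ²)), then the unscaled system operator is globally G^{σ,τ}-hypoelliptic: whenever f1, f2 ∈ L²(ℝ²) and g1, g2 ∈ G^{σ,τ}(ℝ²) satisfy L_{p,q} f1 - M_{p,q} f2 = g1 and L_{p,q} f2 + M_{p,q} f1 = g2 in the sense of tempered distributions, then f1, f2 ∈ G^{σ,τ}(ℝ²). The analogous implication holds with G^{σ,τ}(ℝ²) replaced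 throughout by the Sobolev space H^m(ℝ²) of L² functions whose distributional derivatives up to order m lie in L². -/
open MeasureTheory Complex Real ENNReal

noncomputable section

/-- anisotropic Gevrey space G^{σ,τ}(ℝ²) -/
def Gevrey (σ τ : ℝ) (u : Fn) : Prop :=
  ContDiff ℝ (⊤ : ℕ∞) u ∧ ∃ C : ℝ, 0 < C ∧ ∀ a b : ℕ,
    N (pdx^[a] (pdy^[b] u)) ≤
      ENNReal.ofReal (C ^ (1 + a + b) * ((a.factorial : ℝ)) ^ σ * ((b.factorial : ℝ)) ^ τ)

/-- formal transpose of Z_{1,λ} up to sign: D_x + (λ^{p+1}/2) y^p -/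
def Z1t (p : ℕ) (lam : ℝ) (u : Fn) : Fn :=
  fun z => Dx u z + ((lam ^ (p + 1) / 2 : ℝ) : ℂ) * (z.2 : ℂ) ^ p * u z
def Z2t (q : ℕ) (lam : ℝ) (u : Fn) : Fn :=
  fun z => Dy u z - ((lam ^ (q + 1) / 2 : ℝ) : ℂ) * (z.1 : ℂ) ^ q * u z

/-- formal transpose of L_{p,q;λ} -/
def LpqT (p q : ℕ) (lam : ℝ) (u : Fn) : Fn :=
  fun z => Z1t p lam (Z1t p lam u) z + Z2t q lam (Z2t q lam u) z

/-- `L_{p,q;λ} f1 - M_{p,q;λ} f2 = g` in the sense of tempered distributions -/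
def DistEqMinus (p q : ℕ) (lam : ℝ) (f1 f2 g : Fn) : Prop :=
  ∀ φ : SchwartzMap Pt ℂ,
    ((∫ z, f1 z * LpqT p q lam (⇑φ) z) - ∫ z, f2 z * Mpq p q lam (⇑φ) z) = ∫ z, g z * φ z

/-- `L_{p,q;λ} f2 + M_{p,q;λ} f1 = g` in the sense of tempered distributions -/
def DistEqPlus (p q : ℕ) (lam : ℝ) (f1 f2 g : Fn) : Prop :=
  ∀ φ : SchwartzMap Pt ℂ,
    ((∫ z, f2 z * LpqT p q lam (⇑φ) z) + ∫ z, f1 z * Mpq p q lam (⇑φ) z) = ∫ z, g z * φ z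


/-- Global G^{σ,τ}-hypoellipticity of the parametric system (λ-twisted Laplacian acting on 1-forms). -/
def GHypo (p q : ℕ) (lam : ℝ) (σ τ : ℝ) : Prop :=
  ∀ u1 u2 v1 v2 : Fn,
    MemLp u1 2 volume → MemLp u2 2 volume →
    Gevrey σ τ v1 → Gevrey σ τ v2 →
    DistEqMinus p q lam u1 u2 v1 → DistEqPlus p q lam u1 u2 v2 →
    (∃ w1 : Fn, Gevrey σ τ w1 ∧ u1 =ᵐ[volume] w1) ∧
    (∃ w2 : Fn, Gevrey σ τ w2 ∧ u2 =ᵐ[volume] w2)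

/-- membership in the Sobolev space H^m(ℝ²): L² with distributional derivatives up to order m in L². -/
def SobH (m : ℕ) (f : Fn) : Prop :=
  MemLp f 2 volume ∧ ∀ a b : ℕ, a + b ≤ m → ∃ v : Fn, MemLp v 2 volume ∧
    ∀ φ : SchwartzMap Pt ℂ,
      (∫ z, f z * pdx^[a] (pdy^[b] (⇑φ)) z) = (-1 : ℂ) ^ (a + b) * ∫ z, v z * φ z

/-- Global H^m-hypoellipticity of the parametric system. -/
def HmHypo (p q : ℕ) (lam : ℝ) (m : ℕ) : Prop :=
  ∀ u1 u2 v1 v2 : Fn,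
    MemLp u1 2 volume → MemLp u2 2 volume →
    SobH m v1 → SobH m v2 →
    DistEqMinus p q lam u1 u2 v1 → DistEqPlus p q lam u1 u2 v2 →
    SobH m u1 ∧ SobH m u2


namespace St18

/-! ### Dilation machinery -/

def sc (c : ℝ) (f : Fn) : Fn := fun z => f (c • z)

lemma sc_sc {c : ℝ} (hc : c ≠ 0) (f : Fn) : sc c⁻¹ (sc c f) = f := by
  funext z; simp [sc, smul_smul, mul_inv_cancel₀ hc]

lemma contDiff_sc {n : WithTop ℕ∞} {c : ℝ} {f : Fn} (hf : ContDiff ℝ n f) :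
    ContDiff ℝ n (sc c f) :=
  hf.comp (contDiff_id.const_smul c)

lemma fderiv_sc {c : ℝ} {f : Fn} (z : Pt) (hf : DifferentiableAt ℝ f (c • z)) (v : Pt) :
    fderiv ℝ (sc c f) z v = (c : ℂ) * fderiv ℝ f (c • z) v := by
  have h2 : fderiv ℝ (sc c f) z
      = (fderiv ℝ f (c • z)).comp (c • ContinuousLinearMap.id ℝ Pt) := by
    rw [show sc c f = f ∘ ⇑(c • ContinuousLinearMap.id ℝ Pt) from rfl,
      fderiv_comp z (by simpa using hf) ((c • ContinuousLinearMap.id ℝ Pt).differentiableAt),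
      ContinuousLinearMap.fderiv]
    simp
  simp only [h2, ContinuousLinearMap.coe_comp', Function.comp_apply,
    ContinuousLinearMap.smul_apply, ContinuousLinearMap.id_apply]
  rw [(fderiv ℝ f (c • z)).map_smul, Complex.real_smul]

lemma pdx_sc {c : ℝ} {f : Fn} (z : Pt) (hf : DifferentiableAt ℝ f (c • z)) :
    pdx (sc c f) z = (c : ℂ) * pdx f (c • z) := fderiv_sc z hf _
lemma pdy_sc {c : ℝ} {f : Fn} (z : Pt) (hf : DifferentiableAt ℝ f (c • z)) :
    pdy (sc c f) z = (c : ℂ) * pdy f (c • z) := fderiv_sc z hf _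

lemma contDiff_pdx {f : Fn} (hf : ContDiff ℝ (⊤ : ℕ∞) f) : ContDiff ℝ (⊤ : ℕ∞) (pdx f) :=
  (hf.fderiv_right (by exact_mod_cast le_top)).clm_apply contDiff_const
lemma contDiff_pdy {f : Fn} (hf : ContDiff ℝ (⊤ : ℕ∞) f) : ContDiff ℝ (⊤ : ℕ∞) (pdy f) :=
  (hf.fderiv_right (by exact_mod_cast le_top)).clm_apply contDiff_const

lemma pdx_const_mul {f : Fn} (k : ℂ) (z : Pt) (hf : DifferentiableAt ℝ f z) :
    pdx (fun w => k * f w) z = k * pdx f z := by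
  simp only [pdx, fderiv_const_mul hf k]; rfl
lemma pdy_const_mul {f : Fn} (k : ℂ) (z : Pt) (hf : DifferentiableAt ℝ f z) :
    pdy (fun w => k * f w) z = k * pdy f z := by
  simp only [pdy, fderiv_const_mul hf k]; rfl

lemma pdx_iter_const_mul {f : Fn} (hf : ContDiff ℝ (⊤ : ℕ∞) f) (k : ℂ) :
    ∀ a : ℕ, pdx^[a] (fun w => k * f w) = fun z => k * pdx^[a] f z := by
  intro a
  induction a generalizing f hf with
  | zero => rfl
  | succ a ih =>
    rw [Function.iterate_succ_apply, Function.iterate_succ_apply]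
    rw [show pdx (fun w => k * f w) = fun z => k * pdx f z from
      funext fun z => pdx_const_mul k z (hf.differentiable (by simp) z)]
    exact ih (contDiff_pdx hf)

lemma pdy_iter_const_mul {f : Fn} (hf : ContDiff ℝ (⊤ : ℕ∞) f) (k : ℂ) :
    ∀ a : ℕ, pdy^[a] (fun w => k * f w) = fun z => k * pdy^[a] f z := by
  intro a
  induction a generalizing f hf with
  | zero => rfl
  | succ a ih =>
    rw [Function.iterate_succ_apply, Function.iterate_succ_apply]
    rw [show pdy (fun w => k * f w) = fun z => k * pdy f z from
      funext fun z => pdy_const_mul k z (hf.differentiable (by simp) z)]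
    exact ih (contDiff_pdy hf)

lemma contDiff_pdx_iter {f : Fn} (hf : ContDiff ℝ (⊤ : ℕ∞) f) (a : ℕ) : ContDiff ℝ (⊤ : ℕ∞) (pdx^[a] f) := by
  induction a generalizing f hf with
  | zero => exact hf
  | succ a ih => rw [Function.iterate_succ_apply]; exact ih (contDiff_pdx hf)
lemma contDiff_pdy_iter {f : Fn} (hf : ContDiff ℝ (⊤ : ℕ∞) f) (a : ℕ) : ContDiff ℝ (⊤ : ℕ∞) (pdy^[a] f) := by
  induction a generalizing f hf with
  | zero => exact hf
  | succ a ih => rw [Function.iterate_succ_apply]; exact ih (contDiff_pdy hf)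

lemma pdx_iter_sc {c : ℝ} {f : Fn} (hf : ContDiff ℝ (⊤ : ℕ∞) f) :
    ∀ a : ℕ, pdx^[a] (sc c f) = fun z => (c : ℂ) ^ a * pdx^[a] f (c • z) := by
  intro a
  induction a generalizing f hf with
  | zero => funext z; simp [sc]
  | succ a ih =>
    rw [Function.iterate_succ_apply,
      show pdx (sc c f) = fun z => (c : ℂ) * sc c (pdx f) z from
        funext fun z => pdx_sc z (hf.differentiable (by simp) _),
      pdx_iter_const_mul (contDiff_sc (contDiff_pdx hf)) _ a, ih (contDiff_pdx hf)]
    funext z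
    simp only [sc]
    rw [Function.iterate_succ_apply]
    ring

lemma pdy_iter_sc {c : ℝ} {f : Fn} (hf : ContDiff ℝ (⊤ : ℕ∞) f) :
    ∀ a : ℕ, pdy^[a] (sc c f) = fun z => (c : ℂ) ^ a * pdy^[a] f (c • z) := by
  intro a
  induction a generalizing f hf with
  | zero => funext z; simp [sc]
  | succ a ih =>
    rw [Function.iterate_succ_apply,
      show pdy (sc c f) = fun z => (c : ℂ) * sc c (pdy f) z from
        funext fun z => pdy_sc z (hf.differentiable (by simp) _),
      pdy_iter_const_mul (contDiff_sc (contDiff_pdy hf)) _ a, ih (contDiff_pdy hf)]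
    funext z
    simp only [sc]
    rw [Function.iterate_succ_apply]
    ring

lemma pdxy_sc {c : ℝ} {f : Fn} (hf : ContDiff ℝ (⊤ : ℕ∞) f) (a b : ℕ) :
    pdx^[a] (pdy^[b] (sc c f)) = fun z => (c : ℂ) ^ (a + b) * pdx^[a] (pdy^[b] f) (c • z) := by
  have hg : ContDiff ℝ (⊤ : ℕ∞) (pdy^[b] f) := contDiff_pdy_iter hf b
  have h1 : pdy^[b] (sc c f) = fun z => (c : ℂ) ^ b * sc c (pdy^[b] f) z := by
    rw [pdy_iter_sc hf b]; rfl
  rw [h1, pdx_iter_const_mul (contDiff_sc hg) _ a, pdx_iter_sc hg a]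
  funext z
  simp only [sc]
  rw [pow_add]
  ring

/-! ### Measure-theoretic lemmas -/

lemma finrank_Pt : Module.finrank ℝ Pt = 2 := by
  simp [Module.finrank_prod]

lemma integral_sc {c : ℝ} (hc : 0 < c) (F : Pt → ℂ) :
    ∫ z, F (c • z) = ((c ^ 2)⁻¹ : ℝ) • ∫ z, F z := by
  rw [Measure.integral_comp_smul volume F c, finrank_Pt,
    _root_.abs_of_nonneg (by positivity)]

lemma map_volume_sc {c : ℝ} (hc : c ≠ 0) :
    Measure.map (c • ·) (volume : Measure Pt) = ENNReal.ofReal |(c ^ 2)⁻¹| • volume := by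
  rw [Measure.map_addHaar_smul volume hc, finrank_Pt]

lemma measurableEmbedding_sc {c : ℝ} (hc : c ≠ 0) :
    MeasurableEmbedding (fun z : Pt => c • z) :=
  (Homeomorph.smul (isUnit_iff_ne_zero.2 hc).unit).toMeasurableEquiv.measurableEmbedding

lemma N_sc {c : ℝ} (hc : 0 < c) (f : Fn) :
    N (sc c f) = ENNReal.ofReal c⁻¹ * N f := by
  have h1 : N (sc c f) = eLpNorm f 2 (Measure.map (c • ·) volume) :=
    ((measurableEmbedding_sc hc.ne').eLpNorm_map_measure (g := f)).symm
  rw [show N (sc c f) = eLpNorm f 2 (Measure.map (c • ·) volume) from h1, map_volume_sc hc.ne',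
    eLpNorm_smul_measure_of_ne_zero (by simp [hc.ne', pow_eq_zero_iff]), smul_eq_mul]
  congr 1
  rw [_root_.abs_of_nonneg (by positivity)]
  rw [show ((1:ℝ≥0∞)/2).toReal = (1/2 : ℝ) by simp,
    ENNReal.ofReal_rpow_of_pos (by positivity)]
  congr 1
  rw [show ((c^2)⁻¹ : ℝ) = (c⁻¹)^(2:ℕ) by rw [inv_pow], ← Real.rpow_natCast (c⁻¹) 2,
    ← Real.rpow_mul (by positivity)]
  norm_num

lemma quasiMP_sc {c : ℝ} (hc : c ≠ 0) :
    Measure.QuasiMeasurePreserving (fun z : Pt => c • z) volume volume :=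
  Measure.quasiMeasurePreserving_smul volume hc

lemma memLp_sc {c : ℝ} (hc : 0 < c) {f : Fn} (hf : MemLp f 2 volume) :
    MemLp (sc c f) 2 volume := by
  refine ⟨hf.1.comp_quasiMeasurePreserving (quasiMP_sc hc.ne'), ?_⟩
  rw [show eLpNorm (sc c f) 2 volume = N (sc c f) from rfl, N_sc hc f]
  exact ENNReal.mul_lt_top ENNReal.ofReal_lt_top hf.2

lemma ae_sc {c : ℝ} (hc : c ≠ 0) {f g : Fn} (h : f =ᵐ[volume] g) :
    sc c f =ᵐ[volume] sc c g :=
  (quasiMP_sc hc).ae_eq_comp h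

lemma N_const_mul (k : ℂ) (g : Fn) : N (fun z => k * g z) = (‖k‖₊ : ℝ≥0∞) * N g := by
  have h0 : (fun z => k * g z) = k • g := by funext z; simp
  rw [N, h0, eLpNorm_const_smul]; rfl

lemma int_transfer {c : ℝ} (hc : 0 < c) (f A B : Fn) (k : ℂ)
    (hAB : ∀ w, A (c⁻¹ • w) = k * B w) :
    ∫ z, sc c f z * A z = ((c : ℂ) ^ 2)⁻¹ * k * ∫ w, f w * B w := by
  have h1 : (fun z => sc c f z * A z)
      = fun z => (fun w => f w * A (c⁻¹ • w)) (c • z) := by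
    funext z
    simp only [sc, smul_smul, inv_mul_cancel₀ hc.ne', one_smul]
  calc ∫ z, sc c f z * A z = ∫ z, (fun w => f w * A (c⁻¹ • w)) (c • z) := by rw [h1]
    _ = ((c ^ 2)⁻¹ : ℝ) • ∫ w, f w * A (c⁻¹ • w) :=
        integral_sc hc (fun w => f w * A (c⁻¹ • w))
    _ = ((c ^ 2)⁻¹ : ℝ) • ∫ w, k * (f w * B w) := by
        congr 1; congr 1; funext w; rw [hAB w]; ring
    _ = ((c : ℂ) ^ 2)⁻¹ * k * ∫ w, f w * B w := by
        rw [integral_const_mul, Complex.real_smul]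
        push_cast
        ring

/-! ### Operator scaling -/

lemma contDiff_Z1t {p : ℕ} {mu : ℝ} {f : Fn} (hf : ContDiff ℝ (⊤ : ℕ∞) f) :
    ContDiff ℝ (⊤ : ℕ∞) (Z1t p mu f) := by
  unfold Z1t Dx
  exact (contDiff_const.mul (contDiff_pdx hf)).add
    ((contDiff_const.mul ((Complex.ofRealCLM.contDiff.comp contDiff_snd).pow p)).mul hf)

lemma contDiff_Z2t {q : ℕ} {mu : ℝ} {f : Fn} (hf : ContDiff ℝ (⊤ : ℕ∞) f) :
    ContDiff ℝ (⊤ : ℕ∞) (Z2t q mu f) := by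
  unfold Z2t Dy
  exact (contDiff_const.mul (contDiff_pdy hf)).sub
    ((contDiff_const.mul ((Complex.ofRealCLM.contDiff.comp contDiff_fst).pow q)).mul hf)

lemma Z1t_const_mul {p : ℕ} {mu : ℝ} {f : Fn} (k : ℂ) (z : Pt)
    (hf : DifferentiableAt ℝ f z) :
    Z1t p mu (fun w => k * f w) z = k * Z1t p mu f z := by
  simp only [Z1t, Dx, pdx_const_mul k z hf]; ring

lemma Z2t_const_mul {q : ℕ} {mu : ℝ} {f : Fn} (k : ℂ) (z : Pt)
    (hf : DifferentiableAt ℝ f z) :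
    Z2t q mu (fun w => k * f w) z = k * Z2t q mu f z := by
  simp only [Z2t, Dy, pdy_const_mul k z hf]; ring

lemma Z1t_sc {p : ℕ} {c nu : ℝ} {f : Fn} (z : Pt) (hf : DifferentiableAt ℝ f (c • z)) :
    Z1t p (c * nu) (sc c f) z = (c : ℂ) * Z1t p nu f (c • z) := by
  simp only [Z1t, Dx, pdx_sc z hf, sc, Prod.smul_snd, smul_eq_mul]
  push_cast
  ring

lemma Z2t_sc {q : ℕ} {c nu : ℝ} {f : Fn} (z : Pt) (hf : DifferentiableAt ℝ f (c • z)) :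
    Z2t q (c * nu) (sc c f) z = (c : ℂ) * Z2t q nu f (c • z) := by
  simp only [Z2t, Dy, pdy_sc z hf, sc, Prod.smul_fst, smul_eq_mul]
  push_cast
  ring

lemma LpqT_sc {p q : ℕ} {c nu : ℝ} {f : Fn} (hf : ContDiff ℝ (⊤ : ℕ∞) f) (z : Pt) :
    LpqT p q (c * nu) (sc c f) z = (c : ℂ) ^ 2 * LpqT p q nu f (c • z) := by
  have h1 : Z1t p (c * nu) (sc c f) = fun w => (c : ℂ) * sc c (Z1t p nu f) w :=
    funext fun w => Z1t_sc w (hf.differentiable (by simp) _)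
  have h2 : Z2t q (c * nu) (sc c f) = fun w => (c : ℂ) * sc c (Z2t q nu f) w :=
    funext fun w => Z2t_sc w (hf.differentiable (by simp) _)
  have d1 : DifferentiableAt ℝ (sc c (Z1t p nu f)) z :=
    (contDiff_sc (contDiff_Z1t hf)).differentiable (by simp) z
  have d2 : DifferentiableAt ℝ (sc c (Z2t q nu f)) z :=
    (contDiff_sc (contDiff_Z2t hf)).differentiable (by simp) z
  have e1 : DifferentiableAt ℝ (Z1t p nu f) (c • z) :=
    (contDiff_Z1t hf).differentiable (by simp) _
  have e2 : DifferentiableAt ℝ (Z2t q nu f) (c • z) :=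
    (contDiff_Z2t hf).differentiable (by simp) _
  simp only [LpqT, h1, h2, Z1t_const_mul _ z d1, Z2t_const_mul _ z d2,
    Z1t_sc z e1, Z2t_sc z e2]
  ring

lemma Mpq_sc {p q : ℕ} (hp : 1 ≤ p) (hq : 1 ≤ q) {c nu : ℝ} {f : Fn} (z : Pt) :
    Mpq p q (c * nu) (sc c f) z = (c : ℂ) ^ 2 * Mpq p q nu f (c • z) := by
  have e1 : ((c : ℂ) * nu) ^ (q + 1) * (z.1 : ℂ) ^ (q - 1)
      = (c : ℂ) ^ 2 * (nu : ℂ) ^ (q + 1) * ((c : ℂ) * z.1) ^ (q - 1) := by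
    rw [mul_pow, mul_pow, show (c : ℂ) ^ (q + 1) = (c : ℂ) ^ 2 * (c : ℂ) ^ (q - 1) by
      rw [← pow_add]; congr 1; omega]
    ring
  have e2 : ((c : ℂ) * nu) ^ (p + 1) * (z.2 : ℂ) ^ (p - 1)
      = (c : ℂ) ^ 2 * (nu : ℂ) ^ (p + 1) * ((c : ℂ) * z.2) ^ (p - 1) := by
    rw [mul_pow, mul_pow, show (c : ℂ) ^ (p + 1) = (c : ℂ) ^ 2 * (c : ℂ) ^ (p - 1) by
      rw [← pow_add]; congr 1; omega]
    ring
  simp only [Mpq, sc, Prod.smul_fst, Prod.smul_snd, smul_eq_mul]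
  push_cast
  linear_combination (Complex.I / 2 * (q : ℂ) * f (c • z)) * e1
    + (Complex.I / 2 * (p : ℂ) * f (c • z)) * e2

/-! ### Schwartz dilation -/

def dilE (c : ℝ) (hc : c ≠ 0) : Pt ≃L[ℝ] Pt :=
  { toLinearEquiv :=
    { toFun := fun z => c • z
      map_add' := smul_add c
      map_smul' := fun r z => smul_comm c r z
      invFun := fun z => c⁻¹ • z
      left_inv := fun z => by simp [smul_smul, inv_mul_cancel₀ hc]
      right_inv := fun z => by simp [smul_smul, mul_inv_cancel₀ hc] }
    continuous_toFun := continuous_const_smul c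
    continuous_invFun := continuous_const_smul c⁻¹ }

def scS (c : ℝ) (hc : c ≠ 0) (φ : SchwartzMap Pt ℂ) : SchwartzMap Pt ℂ :=
  SchwartzMap.compCLMOfContinuousLinearEquiv ℝ (dilE c hc) φ

lemma scS_coe (c : ℝ) (hc : c ≠ 0) (φ : SchwartzMap Pt ℂ) :
    ⇑(scS c hc φ) = sc c ⇑φ := rfl

/-! ### Gevrey and Sobolev scaling -/

lemma coeff_bound {c C : ℝ} (hc : 0 < c) (hC : 0 < C) (nk : ℝ)
    (A B : ℝ) (hA : 0 ≤ A) (hB : 0 ≤ B) (a b : ℕ) :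
    nk * c ^ (a + b) * (c⁻¹ * (C ^ (1 + a + b) * A * B)) ≤
      (C * max c 1 * max (nk * c⁻¹) 1) ^ (1 + a + b) * A * B := by
  have h1 : c ^ (a + b) ≤ (max c 1) ^ (1 + a + b) :=
    (pow_le_pow_left₀ hc.le (le_max_left c 1) _).trans
      (pow_le_pow_right₀ (le_max_right c 1) (by omega))
  have h2 : nk * c⁻¹ ≤ (max (nk * c⁻¹) 1) ^ (1 + a + b) :=
    (le_max_left _ _).trans (le_self_pow₀ (le_max_right _ _) (by omega))
  calc nk * c ^ (a + b) * (c⁻¹ * (C ^ (1 + a + b) * A * B))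
      = ((nk * c⁻¹) * c ^ (a + b) * C ^ (1 + a + b)) * (A * B) := by ring
    _ ≤ ((max (nk * c⁻¹) 1) ^ (1 + a + b) * (max c 1) ^ (1 + a + b) * C ^ (1 + a + b))
        * (A * B) := by
        have h3 := mul_le_mul (mul_le_mul h2 h1 (by positivity) (by positivity))
          (le_refl (C ^ (1 + a + b))) (by positivity)
          (by positivity : (0:ℝ) ≤ (max (nk * c⁻¹) 1) ^ (1 + a + b) * (max c 1) ^ (1 + a + b))
        exact mul_le_mul h3 (le_refl _) (by positivity) (by positivity)
    _ = (C * max c 1 * max (nk * c⁻¹) 1) ^ (1 + a + b) * A * B := by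
        rw [mul_pow, mul_pow]; ring

lemma Gevrey_sc {σ τ : ℝ} {c : ℝ} (hc : 0 < c) (k : ℂ) {f : Fn} (hf : Gevrey σ τ f) :
    Gevrey σ τ (fun z => k * sc c f z) := by
  obtain ⟨hsm, C, hC, hb⟩ := hf
  have hsm' : ContDiff ℝ (⊤ : ℕ∞) f := hsm.of_le (by simp)
  refine ⟨contDiff_const.mul (contDiff_sc hsm),
    C * max c 1 * max (‖k‖ * c⁻¹) 1, by positivity, fun a b => ?_⟩
  have hg : ContDiff ℝ (⊤ : ℕ∞) (pdy^[b] f) := contDiff_pdy_iter hsm' b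
  have heq : pdx^[a] (pdy^[b] (fun z => k * sc c f z))
      = fun z => (k * (c : ℂ) ^ (a + b)) * sc c (pdx^[a] (pdy^[b] f)) z := by
    have h1 : (fun z => k * pdy^[b] (sc c f) z)
        = fun z => (k * (c : ℂ) ^ b) * sc c (pdy^[b] f) z := by
      funext z; rw [pdy_iter_sc hsm' b]; simp only [sc]; ring
    rw [pdy_iter_const_mul (contDiff_sc hsm') k b, h1,
      pdx_iter_const_mul (contDiff_sc hg) (k * (c : ℂ) ^ b) a, pdx_iter_sc hg a]
    funext z
    simp only [sc]
    rw [pow_add]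
    ring
  rw [heq, N_const_mul, N_sc hc]
  calc (‖k * (c : ℂ) ^ (a + b)‖₊ : ℝ≥0∞)
        * (ENNReal.ofReal c⁻¹ * N (pdx^[a] (pdy^[b] f)))
      ≤ ENNReal.ofReal (‖k‖ * c ^ (a + b)) * (ENNReal.ofReal c⁻¹ *
          ENNReal.ofReal (C ^ (1 + a + b)
            * ((a.factorial : ℝ)) ^ σ * ((b.factorial : ℝ)) ^ τ)) := by
        gcongr
        · apply le_of_eq
          rw [← ENNReal.ofReal_coe_nnreal, coe_nnnorm, norm_mul, norm_pow, Complex.norm_real,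
            Real.norm_eq_abs, _root_.abs_of_pos hc]
        · exact hb a b
    _ = ENNReal.ofReal (‖k‖ * c ^ (a + b) * (c⁻¹ * (C ^ (1 + a + b)
          * ((a.factorial : ℝ)) ^ σ * ((b.factorial : ℝ)) ^ τ))) := by
        rw [← ENNReal.ofReal_mul (by positivity), ← ENNReal.ofReal_mul (by positivity)]
    _ ≤ _ := ENNReal.ofReal_le_ofReal
        (coeff_bound hc hC ‖k‖ _ _ (by positivity) (by positivity) a b)

lemma SobH_sc {m : ℕ} {c : ℝ} (hc : 0 < c) (k : ℂ) {g : Fn} (hg : SobH m g) :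
    SobH m (fun z => k * sc c g z) := by
  obtain ⟨hg2, hder⟩ := hg
  refine ⟨(memLp_sc hc hg2).const_mul k, fun a b hab => ?_⟩
  obtain ⟨v, hv, hint⟩ := hder a b hab
  have hcne : (c : ℂ) ≠ 0 := Complex.ofReal_ne_zero.2 hc.ne'
  refine ⟨fun z => k * (c : ℂ) ^ (a + b) * sc c v z,
    (memLp_sc hc hv).const_mul (k * (c : ℂ) ^ (a + b)), fun φ => ?_⟩
  set ψ := scS c⁻¹ (inv_ne_zero hc.ne') φ with hψdef
  have hφs := φ.smooth ⊤
  have hkey : ∀ w : Pt, pdx^[a] (pdy^[b] ⇑φ) (c⁻¹ • w)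
      = (c : ℂ) ^ (a + b) * pdx^[a] (pdy^[b] ⇑ψ) w := by
    intro w
    have h := congrFun (pdxy_sc (c := c⁻¹) hφs a b) w
    rw [hψdef, scS_coe, h, Complex.ofReal_inv, inv_pow, ← mul_assoc,
      mul_inv_cancel₀ (pow_ne_zero _ hcne), one_mul]
  have hvψ : ∫ w, v w * ⇑ψ w = (c : ℂ) ^ 2 * ∫ z, sc c v z * ⇑φ z := by
    have h2 : ∫ w, sc c⁻¹ (sc c v) w * ⇑ψ w
        = (((c⁻¹ : ℝ) : ℂ) ^ 2)⁻¹ * 1 * ∫ z, sc c v z * ⇑φ z := by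
      refine int_transfer (inv_pos.2 hc) (sc c v) ⇑ψ ⇑φ 1 (fun w => ?_)
      rw [one_mul, hψdef, scS_coe]
      show (⇑φ) (c⁻¹ • (c⁻¹)⁻¹ • w) = ⇑φ w
      rw [inv_inv, smul_smul, inv_mul_cancel₀ hc.ne', one_smul]
    rw [sc_sc hc.ne'] at h2
    rw [h2, mul_one, Complex.ofReal_inv, inv_pow, inv_inv]
  have hconst : ∫ z, (k * (c : ℂ) ^ (a + b) * sc c v z) * ⇑φ z
      = (k * (c : ℂ) ^ (a + b)) * ∫ z, sc c v z * ⇑φ z := by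
    rw [← integral_const_mul]; congr 1; funext z; ring
  calc ∫ z, (fun z => k * sc c g z) z * pdx^[a] (pdy^[b] ⇑φ) z
      = k * ∫ z, sc c g z * pdx^[a] (pdy^[b] ⇑φ) z := by
        rw [← integral_const_mul]; congr 1; funext z; ring
    _ = k * (((c : ℂ) ^ 2)⁻¹ * (c : ℂ) ^ (a + b) * ∫ w, g w * pdx^[a] (pdy^[b] ⇑ψ) w) := by
        rw [int_transfer hc g _ _ ((c : ℂ) ^ (a + b)) hkey]
    _ = k * (((c : ℂ) ^ 2)⁻¹ * (c : ℂ) ^ (a + b)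
          * ((-1 : ℂ) ^ (a + b) * ((c : ℂ) ^ 2 * ∫ z, sc c v z * ⇑φ z))) := by
        rw [hint ψ, hvψ]
    _ = (-1 : ℂ) ^ (a + b) * ∫ z, (k * (c : ℂ) ^ (a + b) * sc c v z) * ⇑φ z := by
        rw [hconst]
        field_simp

/-! ### Distributional equation transfer -/

lemma LpqT_key {p q : ℕ} {lam : ℝ} (hl : 0 < lam) (φ : SchwartzMap Pt ℂ) (w : Pt) :
    LpqT p q lam ⇑φ (lam⁻¹ • w)
      = (lam : ℂ) ^ 2 * LpqT p q 1 ⇑(scS lam⁻¹ (inv_ne_zero hl.ne') φ) w := by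
  have h := LpqT_sc (p := p) (q := q) (c := lam⁻¹) (nu := lam) (f := ⇑φ) (φ.smooth ⊤) w
  rw [inv_mul_cancel₀ hl.ne'] at h
  rw [scS_coe, h, Complex.ofReal_inv, inv_pow, ← mul_assoc,
    mul_inv_cancel₀ (pow_ne_zero 2 (Complex.ofReal_ne_zero.2 hl.ne')), one_mul]

lemma Mpq_key {p q : ℕ} (hp : 1 ≤ p) (hq : 1 ≤ q) {lam : ℝ} (hl : 0 < lam)
    (φ : SchwartzMap Pt ℂ) (w : Pt) :
    Mpq p q lam ⇑φ (lam⁻¹ • w)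
      = (lam : ℂ) ^ 2 * Mpq p q 1 ⇑(scS lam⁻¹ (inv_ne_zero hl.ne') φ) w := by
  have h := Mpq_sc (p := p) (q := q) hp hq (c := lam⁻¹) (nu := lam) (f := ⇑φ) w
  rw [inv_mul_cancel₀ hl.ne'] at h
  rw [scS_coe, h, Complex.ofReal_inv, inv_pow, ← mul_assoc,
    mul_inv_cancel₀ (pow_ne_zero 2 (Complex.ofReal_ne_zero.2 hl.ne')), one_mul]

lemma int_transfer' {lam : ℝ} (hl : 0 < lam) (f A B : Fn)
    (hAB : ∀ w, A (lam⁻¹ • w) = (lam : ℂ) ^ 2 * B w) :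
    ∫ z, sc lam f z * A z = ∫ w, f w * B w := by
  rw [int_transfer hl f A B ((lam : ℂ) ^ 2) hAB,
    inv_mul_cancel₀ (pow_ne_zero 2 (Complex.ofReal_ne_zero.2 hl.ne')), one_mul]

lemma rhs_transfer {lam : ℝ} (hl : 0 < lam) (g : Fn) (φ : SchwartzMap Pt ℂ) :
    ∫ z, ((lam : ℂ) ^ 2 * sc lam g z) * ⇑φ z
      = ∫ w, g w * ⇑(scS lam⁻¹ (inv_ne_zero hl.ne') φ) w := by
  have hne : ((lam : ℂ) ^ 2) ≠ 0 := pow_ne_zero 2 (Complex.ofReal_ne_zero.2 hl.ne')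
  calc ∫ z, ((lam : ℂ) ^ 2 * sc lam g z) * ⇑φ z
      = (lam : ℂ) ^ 2 * ∫ z, sc lam g z * ⇑φ z := by
        rw [← integral_const_mul]; congr 1; funext z; ring
    _ = (lam : ℂ) ^ 2 * (((lam : ℂ) ^ 2)⁻¹ * 1
          * ∫ w, g w * ⇑(scS lam⁻¹ (inv_ne_zero hl.ne') φ) w) := by
        rw [int_transfer hl g ⇑φ ⇑(scS lam⁻¹ (inv_ne_zero hl.ne') φ) 1 (fun w => by rw [one_mul]; rfl)]
    _ = ∫ w, g w * ⇑(scS lam⁻¹ (inv_ne_zero hl.ne') φ) w := by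
        rw [← mul_assoc, ← mul_assoc, mul_inv_cancel₀ hne, one_mul, one_mul]

lemma distEqMinus_sc {p q : ℕ} (hp : 1 ≤ p) (hq : 1 ≤ q) {lam : ℝ} (hl : 0 < lam)
    {f1 f2 g : Fn} (h : DistEqMinus p q 1 f1 f2 g) :
    DistEqMinus p q lam (sc lam f1) (sc lam f2)
      (fun z => (lam : ℂ) ^ 2 * sc lam g z) := by
  intro φ
  set ψ := scS lam⁻¹ (inv_ne_zero hl.ne') φ with hψdef
  have hL : ∫ z, sc lam f1 z * LpqT p q lam ⇑φ z = ∫ w, f1 w * LpqT p q 1 ⇑ψ w :=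
    int_transfer' hl f1 _ _ (fun w => LpqT_key hl φ w)
  have hM : ∫ z, sc lam f2 z * Mpq p q lam ⇑φ z = ∫ w, f2 w * Mpq p q 1 ⇑ψ w :=
    int_transfer' hl f2 _ _ (fun w => Mpq_key hp hq hl φ w)
  show (∫ z, sc lam f1 z * LpqT p q lam ⇑φ z) - (∫ z, sc lam f2 z * Mpq p q lam ⇑φ z)
      = ∫ z, ((lam : ℂ) ^ 2 * sc lam g z) * ⇑φ z
  rw [hL, hM, rhs_transfer hl g φ]
  exact h ψ

lemma distEqPlus_sc {p q : ℕ} (hp : 1 ≤ p) (hq : 1 ≤ q) {lam : ℝ} (hl : 0 < lam)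
    {f1 f2 g : Fn} (h : DistEqPlus p q 1 f1 f2 g) :
    DistEqPlus p q lam (sc lam f1) (sc lam f2)
      (fun z => (lam : ℂ) ^ 2 * sc lam g z) := by
  intro φ
  set ψ := scS lam⁻¹ (inv_ne_zero hl.ne') φ with hψdef
  have hL : ∫ z, sc lam f2 z * LpqT p q lam ⇑φ z = ∫ w, f2 w * LpqT p q 1 ⇑ψ w :=
    int_transfer' hl f2 _ _ (fun w => LpqT_key hl φ w)
  have hM : ∫ z, sc lam f1 z * Mpq p q lam ⇑φ z = ∫ w, f1 w * Mpq p q 1 ⇑ψ w :=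
    int_transfer' hl f1 _ _ (fun w => Mpq_key hp hq hl φ w)
  show (∫ z, sc lam f2 z * LpqT p q lam ⇑φ z) + (∫ z, sc lam f1 z * Mpq p q lam ⇑φ z)
      = ∫ z, ((lam : ℂ) ^ 2 * sc lam g z) * ⇑φ z
  rw [hL, hM, rhs_transfer hl g φ]
  exact h ψ

end St18

/-- hypoellipticity of the parametric system implies that of the unscaled system,
both in the Gevrey and in the Sobolev category. -/
theorem stmt_18 (p q : ℕ) (hp : 1 ≤ p) (hq : 1 ≤ q) (lam : ℝ) (hlam : 0 < lam) :
    (∀ σ τ : ℝ, 1 ≤ σ → 1 ≤ τ → GHypo p q lam σ τ → GHypo p q 1 σ τ) ∧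
    (∀ m : ℕ, HmHypo p q lam m → HmHypo p q 1 m) := by
  constructor
  · intro σ τ hσ hτ H f1 f2 g1 g2 hf1 hf2 hg1 hg2 hEm hEp
    obtain ⟨⟨w1, hw1, he1⟩, ⟨w2, hw2, he2⟩⟩ :=
      H (St18.sc lam f1) (St18.sc lam f2)
        (fun z => (lam : ℂ) ^ 2 * St18.sc lam g1 z)
        (fun z => (lam : ℂ) ^ 2 * St18.sc lam g2 z)
        (St18.memLp_sc hlam hf1) (St18.memLp_sc hlam hf2)
        (St18.Gevrey_sc hlam _ hg1) (St18.Gevrey_sc hlam _ hg2)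
        (St18.distEqMinus_sc hp hq hlam hEm) (St18.distEqPlus_sc hp hq hlam hEp)
    constructor
    · refine ⟨St18.sc lam⁻¹ w1, ?_, ?_⟩
      · have h0 := St18.Gevrey_sc (inv_pos.2 hlam) 1 hw1
        simpa using h0
      · have h2 := St18.ae_sc (inv_ne_zero hlam.ne') he1
        rwa [St18.sc_sc hlam.ne'] at h2
    · refine ⟨St18.sc lam⁻¹ w2, ?_, ?_⟩
      · have h0 := St18.Gevrey_sc (inv_pos.2 hlam) 1 hw2
        simpa using h0
      · have h2 := St18.ae_sc (inv_ne_zero hlam.ne') he2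
        rwa [St18.sc_sc hlam.ne'] at h2
  · intro m H f1 f2 g1 g2 hf1 hf2 hg1 hg2 hEm hEp
    obtain ⟨h1, h2⟩ :=
      H (St18.sc lam f1) (St18.sc lam f2)
        (fun z => (lam : ℂ) ^ 2 * St18.sc lam g1 z)
        (fun z => (lam : ℂ) ^ 2 * St18.sc lam g2 z)
        (St18.memLp_sc hlam hf1) (St18.memLp_sc hlam hf2)
        (St18.SobH_sc hlam _ hg1) (St18.SobH_sc hlam _ hg2)
        (St18.distEqMinus_sc hp hq hlam hEm) (St18.distEqPlus_sc hp hq hlam hEp)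
    constructor
    · have h0 := St18.SobH_sc (inv_pos.2 hlam) 1 h1
      rwa [show (fun z => (1 : ℂ) * St18.sc lam⁻¹ (St18.sc lam f1) z) = f1 by
        funext z; rw [one_mul, St18.sc_sc hlam.ne']] at h0
    · have h0 := St18.SobH_sc (inv_pos.2 hlam) 1 h2
      rwa [show (fun z => (1 : ℂ) * St18.sc lam⁻¹ (St18.sc lam f2) z) = f2 by
        funext z; rw [one_mul, St18.sc_sc hlam.ne']] at h0


end
end
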